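/- Let p be a prime number, let A be a commutative ring with p·1 = 0, and let λ, ν ∈ A. For μ ∈ A, let ⋆_μ denote the group operation on A × A given by (u₁,u₂) ⋆_μ (v₁,v₂) = (u₁+v₁, u₂+v₂+μ·Σ_{k=1}^{p−1} c_k u₁^k v₁^{p−k}) with c_k = binom(p,k)/p. Then the map φ_{λ,ν} : A × A → A × A defined by φ_{λ,ν}(u₁,u₂) = (u₁^p − νu₁, u₂^p − ν^p λ^{p−1} u₂ + λ^p Σ_{k=1}^{p−1} c_k u₁^{pk}(−νu₁)^{p−k}) is a group homomorphism from (A × A, ⋆_λ) to (A × A, ⋆_{λ^p}). -/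

import Mathlib

/-! The second coordinate of `⋆_μ` is governed by the Witt cocycle
`W(x, y) = ((x + y)^p - x^p - y^p) / p`. As `p • W` is given by a polynomial over `ℤ`, which
has no `p`-torsion, every commutative ring satisfies
`W(x, y) + W(u, v) + W(x + y, u + v) = W(x, u) + W(y, v) + W(x + u, y + v)`,
both sides being `((x + y + u + v)^p - x^p - y^p - u^p - v^p) / p`. In characteristic `p`,
Frobenius commutes with `W` and `W(-νa, -νb) = -ν^p W(a, b)`; for `x = a^p`, `y = b^p`,
`u = -νa`, `v = -νb`, with `a`, `b` the first coordinates of the two points, the identity is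
exactly the second coordinate of the homomorphism property of `φ_{λ,ν}`. -/

/-- The group law of the twisted Witt group `W₂^μ`. -/
def wittOp (p : ℕ) {A : Type*} [CommRing A] (mu : A) (u v : A × A) : A × A :=
  (u.1 + v.1,
    u.2 + v.2 + mu * ∑ k ∈ Finset.Ioo 0 p, (p.choose k / p : ℕ) * u.1 ^ k * v.1 ^ (p - k))

/-- The twisted Artin–Schreier–Witt isogeny `φ_{λ,ν} = F_λ − I^ν_{λ,λ^{p−1}}`. -/
def wittIsogeny (p : ℕ) {A : Type*} [CommRing A] (lam nu : A) (u : A × A) : A × A :=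
  (u.1 ^ p - nu * u.1,
    u.2 ^ p - nu ^ p * lam ^ (p - 1) * u.2 +
      lam ^ p * ∑ k ∈ Finset.Ioo 0 p,
        (p.choose k / p : ℕ) * u.1 ^ (p * k) * (-(nu * u.1)) ^ (p - k))

open Finset

section WittCocycle

variable {R : Type*} [CommRing R] (p : ℕ)

def wittCocycle (x y : R) : R :=
  ∑ k ∈ Ioo 0 p, ((p.choose k / p : ℕ) : R) * x ^ k * y ^ (p - k)

lemma map_wittCocycle {S F : Type*} [CommRing S] [FunLike F R S] [RingHomClass F R S] (f : F)
    (x y : R) :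
    f (wittCocycle p x y) = wittCocycle p (f x) (f y) := by
  simp [wittCocycle]

lemma wittCocycle_mul_mul (c x y : R) :
    wittCocycle p (c * x) (c * y) = c ^ p * wittCocycle p x y := by
  rw [wittCocycle, wittCocycle, mul_sum]
  refine sum_congr rfl fun k hk => ?_
  have hc : c ^ p = c ^ k * c ^ (p - k) := by
    rw [← pow_add, Nat.add_sub_cancel' (mem_Ioo.mp hk).2.le]
  rw [mul_pow, mul_pow, hc]
  ring

lemma natCast_mul_wittCocycle {p : ℕ} (hp : p.Prime) (x y : R) :
    (p : R) * wittCocycle p x y = (x + y) ^ p - x ^ p - y ^ p := by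
  have hterm : ∀ k ∈ Ioo 0 p, (p : R) * (((p.choose k / p : ℕ) : R) * x ^ k * y ^ (p - k)) =
      x ^ k * y ^ (p - k) * p.choose k := fun k hk => by
    rw [mem_Ioo] at hk
    obtain ⟨m, hm⟩ := hp.dvd_choose_self hk.1.ne' hk.2
    rw [hm, Nat.mul_div_cancel_left m hp.pos]
    push_cast
    ring
  rw [wittCocycle, mul_sum, sum_congr rfl hterm, add_pow, sum_range_succ,
    ← Ico_add_one_left_eq_Ioo, range_eq_Ico, sum_eq_sum_Ico_succ_bot hp.pos]
  simp

lemma wittCocycle_add_add {p : ℕ} (hp : p.Prime) (x y u v : R) :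
    wittCocycle p x y + wittCocycle p u v + wittCocycle p (x + y) (u + v) =
      wittCocycle p x u + wittCocycle p y v + wittCocycle p (x + u) (y + v) := by
  let X : Fin 4 → MvPolynomial (Fin 4) ℤ := MvPolynomial.X
  have universal : wittCocycle p (X 0) (X 1) + wittCocycle p (X 2) (X 3) +
      wittCocycle p (X 0 + X 1) (X 2 + X 3) = wittCocycle p (X 0) (X 2) +
        wittCocycle p (X 1) (X 3) + wittCocycle p (X 0 + X 2) (X 1 + X 3) := by
    refine mul_left_cancel₀ (Nat.cast_ne_zero.mpr hp.ne_zero) ?_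
    simp only [mul_add, natCast_mul_wittCocycle hp]
    ring
  simpa [X, map_wittCocycle] using congrArg (MvPolynomial.aeval ![x, y, u, v]) universal

lemma wittCocycle_pow [Fact p.Prime] [CharP R p] (x y : R) :
    wittCocycle p x y ^ p = wittCocycle p (x ^ p) (y ^ p) :=
  map_wittCocycle p (frobenius R p) x y

lemma wittCocycle_isogeny [Fact p.Prime] [CharP R p] (a b n : R) :
    wittCocycle p (a ^ p) (b ^ p) - n ^ p * wittCocycle p a b +
        wittCocycle p (a ^ p + b ^ p) (-(n * (a + b))) =
      wittCocycle p (a ^ p) (-(n * a)) + wittCocycle p (b ^ p) (-(n * b)) +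
        wittCocycle p (a ^ p - n * a) (b ^ p - n * b) := by
  have hneg : wittCocycle p (-(n * a)) (-(n * b)) = -(n ^ p * wittCocycle p a b) := by
    rw [← neg_one_mul, ← neg_one_mul (n * b), ← mul_assoc, ← mul_assoc, wittCocycle_mul_mul,
      mul_pow, neg_one_pow_char]
    ring
  have h := wittCocycle_add_add (Fact.out : p.Prime) (a ^ p) (b ^ p) (-(n * a)) (-(n * b))
  rw [hneg, ← neg_add, ← mul_add] at h
  simpa only [← sub_eq_add_neg] using h

end WittCocycle

lemma wittOp_eq (p : ℕ) {A : Type*} [CommRing A] (mu : A) (u v : A × A) :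
    wittOp p mu u v = (u.1 + v.1, u.2 + v.2 + mu * wittCocycle p u.1 v.1) :=
  rfl

lemma wittIsogeny_eq (p : ℕ) {A : Type*} [CommRing A] (lam nu : A) (u : A × A) :
    wittIsogeny p lam nu u = (u.1 ^ p - nu * u.1, u.2 ^ p - nu ^ p * lam ^ (p - 1) * u.2 +
      lam ^ p * wittCocycle p (u.1 ^ p) (-(nu * u.1))) := by
  simp only [wittIsogeny, wittCocycle, pow_mul]

/-- If `p` is prime, `A` is a commutative ring with `p·1 = 0`
and `λ, ν ∈ A`, then `φ_{λ,ν}` is a group homomorphism from `(A × A, ⋆_λ)` to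
`(A × A, ⋆_{λ^p})`. -/
theorem stmt18 (p : ℕ) (hp : p.Prime) {A : Type*} [CommRing A]
    (hchar : (p : A) = 0) (lam nu : A) :
    ∀ x y : A × A,
      wittIsogeny p lam nu (wittOp p lam x y) =
        wittOp p (lam ^ p) (wittIsogeny p lam nu x) (wittIsogeny p lam nu y) := by
  rintro ⟨a, s⟩ ⟨b, t⟩
  rcases subsingleton_or_nontrivial A with _ | _
  · exact Subsingleton.elim _ _
  have : Fact p.Prime := ⟨hp⟩
  have : CharP A p := (CharP.charP_iff_prime_eq_zero hp).mpr hchar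
  have hlam : lam ^ (p - 1) * lam = lam ^ p := by rw [← pow_succ, Nat.sub_add_cancel hp.one_le]
  simp only [wittOp_eq, wittIsogeny_eq, add_pow_char, mul_pow, Prod.mk.injEq]
  constructor
  · ring
  · linear_combination lam ^ p * wittCocycle_pow p a b + lam ^ p * wittCocycle_isogeny p a b nu
      - nu ^ p * wittCocycle p a b * hlam
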